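/- arXiv:1905.09212 — 2 statements merged into one kernel-verified Lean document; each statement's English description precedes it below -/
import Mathlib

section
/- Let n be a positive integer, p a prime with p ∤ 6n, and s a real number with s > 0. Then Σ_{k=0}^∞ C(p^k, −n) · p^{−ks} = (1 − p^{−2s}) / ((1 − p^{−s}) · (1 − (−n/p) · p^{−s})), where (−n/p) is the Legendre symbol of −n modulo p. -/
/-!
For `p` odd and `p ∤ a`, the ring `ZMod (p ^ k)` (`k ≥ 1`) is local with `2` and `a` units,
so `y ^ 2 = x ^ 2` factors as `(y - x) (y + x) = 0` with one factor a unit: a unit square has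
exactly the two roots `± x`. By Hensel's lemma `a` is a square mod `p ^ k` iff it is one mod `p`,
hence `C (p ^ k) a = 1 + (a / p)` for every `k ≥ 1`. With `t = p ^ (-s)` and `χ = (a / p)` the
series is `1 + (1 + χ) t / (1 - t)`, which equals `(1 - t²) / ((1 - t) (1 - χ t))` as `χ² = 1`.
-/

/-- `C m n` is the number of residues `x` modulo `m` with `x² ≡ n (mod m)`. -/
noncomputable def C (m : ℕ) (n : ℤ) : ℕ := Nat.card {x : ZMod m // x ^ 2 = (n : ZMod m)}

namespace IsLocalRing

variable {R : Type*} [CommRing R] [IsLocalRing R]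

theorem eq_or_eq_neg_of_sq_eq_sq (h2 : IsUnit (2 : R)) {x y : R} (hx : IsUnit x)
    (h : y ^ 2 = x ^ 2) : y = x ∨ y = -x := by
  have hprod : (y - x) * (y + x) = 0 := by linear_combination h
  have hsum : IsUnit ((y + x) + (x - y)) := by
    rw [show (y + x) + (x - y) = 2 * x by ring]; exact h2.mul hx
  rcases isUnit_or_isUnit_of_isUnit_add hsum with hu | hu
  · exact .inl (sub_eq_zero.mp (hu.mul_left_eq_zero.mp hprod))
  · refine .inr (eq_neg_of_add_eq_zero_left ((hu.mul_right_eq_zero).mp ?_))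
    linear_combination -hprod

theorem card_sq_eq_sq (h2 : IsUnit (2 : R)) {x : R} (hx : IsUnit x) :
    Nat.card {y : R // y ^ 2 = x ^ 2} = 2 := by
  have hne : x ≠ -x := fun h => hx.ne_zero <| (h2.mul_right_eq_zero).mp (by linear_combination h)
  have hsqrts : {y : R | y ^ 2 = x ^ 2} = {x, -x} := by
    ext y
    simp only [Set.mem_ofPred_eq, Set.mem_insert_iff, Set.mem_singleton_iff]
    exact ⟨eq_or_eq_neg_of_sq_eq_sq h2 hx, by rintro (rfl | rfl) <;> ring⟩
  rw [← Set.coe_ofPred, Nat.card_coe_set_eq, hsqrts, Set.ncard_pair hne]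

end IsLocalRing

namespace PadicInt

variable {p : ℕ} [Fact p.Prime]

theorem isUnit_intCast {a : ℤ} (ha : ¬ (p : ℤ) ∣ a) : IsUnit (a : ℤ_[p]) :=
  isUnit_iff.mpr <| le_antisymm (norm_le_one _) <|
    not_lt.mp <| (norm_int_lt_one_iff_dvd a).not.mpr ha

theorem exists_sq_eq_intCast_of_isSquare (hp2 : p ≠ 2) {a : ℤ} (ha : ¬ (p : ℤ) ∣ a)
    (hsq : IsSquare (a : ZMod p)) : ∃ z : ℤ_[p], z ^ 2 = a := by
  obtain ⟨r, hr⟩ := hsq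
  obtain ⟨b, rfl⟩ := ZMod.intCast_surjective r
  have hb : ((b ^ 2 - a : ℤ) : ZMod p) = 0 := by push_cast; rw [hr, sq, sub_self]
  have h2b : ((2 * b : ℤ) : ZMod p) ≠ 0 := by
    have h2 : (2 : ZMod p) ≠ 0 := Ring.two_ne_zero (by rwa [ZMod.ringChar_zmod_n])
    have ha0 : (a : ZMod p) ≠ 0 := mt (ZMod.intCast_zmod_eq_zero_iff_dvd _ _).mp ha
    push_cast
    exact mul_ne_zero h2 fun h => ha0 (by rw [hr, h, mul_zero])
  obtain ⟨z, hz, -⟩ :=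
    hensels_lemma (F := Polynomial.X ^ 2 - Polynomial.C a) (a := (b : ℤ_[p])) (by
      have h1 : ‖((b ^ 2 - a : ℤ) : ℤ_[p])‖ < 1 :=
        (norm_int_lt_one_iff_dvd _).mpr ((ZMod.intCast_zmod_eq_zero_iff_dvd _ _).mp hb)
      have h2 : ‖((2 * b : ℤ) : ℤ_[p])‖ = 1 :=
        isUnit_iff.mp (isUnit_intCast (mt (ZMod.intCast_zmod_eq_zero_iff_dvd _ _).mpr h2b))
      push_cast at h1 h2
      simpa [map_ofNat, ← norm_mul, h2] using h1)
  exact ⟨z, by simpa [sub_eq_zero] using hz⟩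

end PadicInt

theorem ZMod.isLocalRing_prime_pow {p : ℕ} [Fact p.Prime] {k : ℕ} (hk : k ≠ 0) :
    IsLocalRing (ZMod (p ^ k)) :=
  have : Nontrivial (ZMod (p ^ k)) :=
    ZMod.nontrivial_iff.mpr (Nat.one_lt_pow hk (Fact.out : p.Prime).one_lt).ne'
  IsLocalRing.of_surjective (PadicInt.toZModPow k) (ZMod.ringHom_surjective _)

theorem C_one (a : ℤ) : C 1 a = 1 :=
  Nat.card_eq_one_iff_unique.mpr ⟨inferInstance, ⟨⟨0, Subsingleton.elim _ _⟩⟩⟩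

theorem C_prime_pow_eq_legendreSym_add_one {p : ℕ} [Fact p.Prime] (hp2 : p ≠ 2) {a : ℤ}
    (ha : ¬ (p : ℤ) ∣ a) {k : ℕ} (hk : k ≠ 0) :
    (C (p ^ k) a : ℤ) = legendreSym p a + 1 := by
  by_cases hsq : IsSquare (a : ZMod p)
  · have := ZMod.isLocalRing_prime_pow (p := p) hk
    obtain ⟨z, hz⟩ := PadicInt.exists_sq_eq_intCast_of_isSquare hp2 ha hsq
    have hz_unit : IsUnit z := (isUnit_pow_iff two_ne_zero).mp (hz ▸ PadicInt.isUnit_intCast ha)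
    have h2 : IsUnit (2 : ZMod (p ^ k)) := by
      have := (ZMod.isUnit_iff_coprime 2 (p ^ k)).mpr
        (((Nat.coprime_primes Nat.prime_two Fact.out).mpr hp2.symm).pow_right k)
      exact_mod_cast this
    have hx : (PadicInt.toZModPow k z) ^ 2 = (a : ZMod (p ^ k)) := by
      rw [← map_pow, hz, map_intCast]
    have ha0 : (a : ZMod p) ≠ 0 := mt (ZMod.intCast_zmod_eq_zero_iff_dvd _ _).mp ha
    rw [C, ← hx, IsLocalRing.card_sq_eq_sq h2 (hz_unit.map _),
      (legendreSym.eq_one_iff p ha0).mpr hsq]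
    norm_num
  · have : IsEmpty {x : ZMod (p ^ k) // x ^ 2 = (a : ZMod (p ^ k))} := by
      refine ⟨fun ⟨x, hx⟩ => hsq ⟨ZMod.castHom (dvd_pow_self p hk) (ZMod p) x, ?_⟩⟩
      have := congrArg (ZMod.castHom (dvd_pow_self p hk) (ZMod p)) hx
      rwa [map_pow, map_intCast, sq, eq_comm] at this
    rw [C, Nat.card_of_isEmpty, (legendreSym.eq_neg_one_iff p).mpr hsq]
    norm_num

theorem tsum_mul_pow_of_succ_eq {f : ℕ → ℝ} {c t : ℝ} (ht0 : 0 ≤ t) (ht1 : t < 1)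
    (hf : ∀ k, f (k + 1) = c) : ∑' k, f k * t ^ k = f 0 + c * t / (1 - t) := by
  have htail : HasSum (fun k => f (k + 1) * t ^ (k + 1)) (c * t * (1 - t)⁻¹) := by
    have hterm : (fun k => f (k + 1) * t ^ (k + 1)) = fun k => c * t * t ^ k :=
      funext fun k => by rw [hf, pow_succ]; ring
    rw [hterm]
    exact (hasSum_geometric_of_lt_one ht0 ht1).mul_left (c * t)
  rw [((hasSum_nat_add_iff (f := fun k => f k * t ^ k) 1).mp htail).tsum_eq,
    Finset.sum_range_one, pow_zero, mul_one, div_eq_mul_inv, add_comm]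

theorem one_add_mul_div_one_sub_eq {χ t : ℝ} (hχ : χ ^ 2 = 1) (ht0 : 0 < t) (ht1 : t < 1) :
    1 + (χ + 1) * t / (1 - t) = (1 - t ^ 2) / ((1 - t) * (1 - χ * t)) := by
  have h1t : 1 - t ≠ 0 := by linarith
  have hχt : 1 - χ * t ≠ 0 := fun h => by
    have : t ^ 2 = 1 := by linear_combination -t ^ 2 * hχ - (1 + χ * t) * h
    nlinarith
  field_simp
  linear_combination -t ^ 2 * hχ

theorem stmt_9_general (n : ℕ) (p : ℕ) [Fact p.Prime] (hp : ¬ p ∣ 6 * n)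
    (s : ℝ) (hs : 0 < s) :
    ∑' k : ℕ, (C (p ^ k) (-(n : ℤ)) : ℝ) * (p : ℝ) ^ (-(k : ℝ) * s) =
      (1 - (p : ℝ) ^ (-(2 * s))) /
        ((1 - (p : ℝ) ^ (-s)) * (1 - (legendreSym p (-(n : ℤ)) : ℝ) * (p : ℝ) ^ (-s))) := by
  have hp2 : p ≠ 2 := by rintro rfl; exact hp ⟨3 * n, by ring⟩
  have hpn : ¬ (p : ℤ) ∣ -(n : ℤ) := by
    rw [dvd_neg, Int.natCast_dvd_natCast]; exact fun h => hp (h.mul_left 6)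
  have hχ : ((legendreSym p (-(n : ℤ)) : ℤ) : ℝ) ^ 2 = 1 := by
    exact_mod_cast legendreSym.sq_one p (mt (ZMod.intCast_zmod_eq_zero_iff_dvd _ _).mp hpn)
  have hC (k : ℕ) : (C (p ^ (k + 1)) (-(n : ℤ)) : ℝ) = legendreSym p (-(n : ℤ)) + 1 := by
    exact_mod_cast C_prime_pow_eq_legendreSym_add_one hp2 hpn k.succ_ne_zero
  set t : ℝ := (p : ℝ) ^ (-s)
  have hp1 : (1 : ℝ) < p := by exact_mod_cast (Fact.out : p.Prime).one_lt
  have ht0 : 0 < t := by positivity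
  have ht1 : t < 1 := Real.rpow_lt_one_of_one_lt_of_neg hp1 (neg_neg_of_pos hs)
  have hpow (k : ℕ) : (p : ℝ) ^ (-(k : ℝ) * s) = t ^ k := by
    rw [← Real.rpow_mul_natCast (by positivity)]; ring_nf
  have hpow_two : (p : ℝ) ^ (-(2 * s)) = t ^ 2 := by simpa using hpow 2
  simp_rw [hpow, hpow_two]
  rw [tsum_mul_pow_of_succ_eq (f := fun k => (C (p ^ k) (-(n : ℤ)) : ℝ)) ht0.le ht1 hC,
    pow_zero, C_one, Nat.cast_one]
  exact one_add_mul_div_one_sub_eq hχ ht0 ht1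

theorem stmt_9 (n : ℕ) (hn : 0 < n) (p : ℕ) [Fact p.Prime] (hp : ¬ p ∣ 6 * n)
    (s : ℝ) (hs : 0 < s) :
    ∑' k : ℕ, (C (p ^ k) (-(n : ℤ)) : ℝ) * (p : ℝ) ^ (-(k : ℝ) * s) =
      (1 - (p : ℝ) ^ (-(2 * s))) /
        ((1 - (p : ℝ) ^ (-s)) * (1 - (legendreSym p (-(n : ℤ)) : ℝ) * (p : ℝ) ^ (-s))) :=
  stmt_9_general n p hp s hs
end

section
/- Let p be a prime with p ∉ {2, 3}, let n = p^r · n₀ with r an odd positive integer and n₀ a positive integer not divisible by p, and let s be a real number with s > 1/2. Then Σ_{k=0}^∞ C(p^k, −n) · p^{−ks} = ((1 − p^{−2s}) / (1 − p^{−s})) · ((1 − p^{(1−2s)(r+1)/2}) / (1 − p^{1−2s})). In particular, if r = 1 this sum equals (1 − p^{−2s}) / (1 − p^{−s}). -/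
/-!
For `k ≤ r` the congruence `x² ≡ -p^r n₀ (mod p^k)` reads `x² ≡ 0`, whose solutions are the
multiples of `p^⌈k/2⌉`, so `C(p^k, -p^r n₀) = p^⌊k/2⌋`. For `k > r` there is no solution: it
would force `p^r ∣ x²` but `p^(r+1) ∤ x²`, i.e. `v_p(x²) = r`, which is odd. The series is therefore
a finite sum, and grouping the terms `k = 2j, 2j+1` turns it into
`(1 + p^(-s)) * ∑_{j ≤ (r-1)/2} p^((1-2s)j)`, a geometric sum.
-/

open Finset

theorem Nat.Prime.pow_dvd_sq_iff {p k a : ℕ} (hp : p.Prime) :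
    p ^ k ∣ a ^ 2 ↔ p ^ ((k + 1) / 2) ∣ a := by
  rcases eq_or_ne a 0 with rfl | ha
  · simp
  rw [hp.pow_dvd_iff_le_factorization (pow_ne_zero 2 ha), hp.pow_dvd_iff_le_factorization ha,
    Nat.factorization_pow, Finsupp.smul_apply, smul_eq_mul]
  omega

theorem ZMod.card_subtype_dvd_val {n d : ℕ} [NeZero n] (hd : d ∣ n) :
    Nat.card {x : ZMod n // d ∣ x.val} = n / d := by
  let e : {x : ZMod n // d ∣ x.val} ≃ {k : ℕ // k < n ∧ k ≡ 0 [MOD d]} :=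
    { toFun x := ⟨x.1.val, x.1.val_lt, Nat.modEq_zero_iff_dvd.2 x.2⟩
      invFun k := ⟨k.1, by rw [ZMod.val_cast_of_lt k.2.1]; exact Nat.modEq_zero_iff_dvd.1 k.2.2⟩
      left_inv x := Subtype.ext (ZMod.natCast_zmod_val x.1)
      right_inv k := Subtype.ext (ZMod.val_cast_of_lt k.2.1) }
  have hcount := Nat.count_modEq_card n (Nat.pos_of_dvd_of_pos hd (NeZero.pos n)) 0
  rw [Nat.count_eq_card_fintype, Fintype.card_eq_nat_card, Nat.zero_mod,
    Nat.mod_eq_zero_of_dvd hd, if_neg (lt_irrefl 0), add_zero] at hcount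
  rw [Nat.card_congr e, hcount]

theorem ZMod.card_sq_eq_zero_prime_pow {p : ℕ} (hp : p.Prime) (k : ℕ) :
    Nat.card {x : ZMod (p ^ k) // x ^ 2 = 0} = p ^ (k / 2) := by
  have : NeZero (p ^ k) := ⟨pow_ne_zero k hp.ne_zero⟩
  have hsq (x : ZMod (p ^ k)) : x ^ 2 = 0 ↔ p ^ ((k + 1) / 2) ∣ x.val := by
    rw [← hp.pow_dvd_sq_iff, ← ZMod.natCast_eq_zero_iff, Nat.cast_pow, ZMod.natCast_zmod_val]
  rw [Nat.card_congr (Equiv.subtypeEquivRight hsq),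
    ZMod.card_subtype_dvd_val (pow_dvd_pow p (by omega)), Nat.pow_div (by omega) hp.pos]
  congr 1
  omega

theorem C_prime_pow_of_dvd {p k : ℕ} (hp : p.Prime) {n : ℤ} (hn : (p : ℤ) ^ k ∣ n) :
    C (p ^ k) n = p ^ (k / 2) := by
  have hn0 : (n : ZMod (p ^ k)) = 0 := by
    rw [ZMod.intCast_zmod_eq_zero_iff_dvd]; exact_mod_cast hn
  rw [C, hn0, ZMod.card_sq_eq_zero_prime_pow hp]

theorem Nat.Prime.even_of_pow_dvd_sq_add {p k r a n : ℕ} (hp : p.Prime) (hn : ¬ p ∣ n)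
    (hrk : r < k) (h : p ^ k ∣ a ^ 2 + p ^ r * n) : Even r := by
  have hdvd : p ^ r ∣ a ^ 2 :=
    (Nat.dvd_add_left (dvd_mul_right _ _)).1 ((pow_dvd_pow p hrk.le).trans h)
  have hndvd : ¬ p ^ (r + 1) ∣ a ^ 2 := fun hsq => by
    have := (Nat.dvd_add_right hsq).1 ((pow_dvd_pow p hrk).trans h)
    rw [pow_succ, Nat.mul_dvd_mul_iff_left (pow_pos hp.pos r)] at this
    exact hn this
  rw [hp.pow_dvd_sq_iff] at hdvd hndvd
  by_contra hodd
  obtain ⟨m, rfl⟩ := Nat.not_even_iff_odd.1 hodd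
  rw [show (2 * m + 1 + 1 + 1) / 2 = (2 * m + 1 + 1) / 2 by omega] at hndvd
  exact hndvd hdvd

theorem C_prime_pow_neg_eq_zero_of_odd {p k r n : ℕ} (hp : p.Prime) (hn : ¬ p ∣ n) (hr : Odd r)
    (hrk : r < k) : C (p ^ k) (-((p : ℤ) ^ r * n)) = 0 := by
  have : NeZero (p ^ k) := ⟨pow_ne_zero k hp.ne_zero⟩
  refine Nat.card_eq_zero.2 (.inl ⟨fun ⟨x, hx⟩ => ?_⟩)
  refine Nat.not_even_iff_odd.2 hr (hp.even_of_pow_dvd_sq_add hn hrk (a := x.val) ?_)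
  rw [← ZMod.natCast_eq_zero_iff]
  push_cast
  rw [ZMod.natCast_zmod_val, hx]
  push_cast
  ring

theorem sum_range_two_mul_pow_div_two {R : Type*} [CommSemiring R] (a y : R) (m : ℕ) :
    ∑ k ∈ range (2 * m), a ^ (k / 2) * y ^ k = (1 + y) * ∑ j ∈ range m, (a * y ^ 2) ^ j := by
  induction m with
  | zero => simp
  | succ m ih =>
    rw [mul_add_one, sum_range_succ, sum_range_succ, ih, sum_range_succ,
      Nat.mul_div_cancel_left _ two_pos, show (2 * m + 1) / 2 = m by omega]
    ring

theorem tsum_C_neg_prime_pow_mul_rpow {p r n : ℕ} (hp : p.Prime) (hn : ¬ p ∣ n) (hr : Odd r)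
    (s : ℝ) :
    ∑' k : ℕ, (C (p ^ k) (-((p : ℤ) ^ r * n)) : ℝ) * (p : ℝ) ^ (-(k : ℝ) * s) =
      (1 + (p : ℝ) ^ (-s)) * ∑ j ∈ range ((r + 1) / 2), ((p : ℝ) ^ (1 - 2 * s)) ^ j := by
  have hp0 : (0 : ℝ) ≤ p := p.cast_nonneg
  have hq : (p : ℝ) * ((p : ℝ) ^ (-s)) ^ 2 = (p : ℝ) ^ (1 - 2 * s) := by
    rw [← Real.rpow_mul_natCast hp0, show 1 - 2 * s = 1 + -s * (2 : ℕ) by push_cast; ring,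
      Real.rpow_add (by exact_mod_cast hp.pos), Real.rpow_one]
  obtain ⟨m, rfl⟩ := hr
  calc ∑' k : ℕ, (C (p ^ k) (-((p : ℤ) ^ (2 * m + 1) * n)) : ℝ) * (p : ℝ) ^ (-(k : ℝ) * s)
      = ∑ k ∈ range (2 * (m + 1)), (p : ℝ) ^ (k / 2) * ((p : ℝ) ^ (-s)) ^ k := by
        rw [tsum_eq_sum (s := range (2 * (m + 1)))]
        · refine sum_congr rfl fun k hk => ?_
          have hkr : k ≤ 2 * m + 1 := by rw [mem_range] at hk; omega
          rw [C_prime_pow_of_dvd hp (dvd_neg.2 (dvd_mul_of_dvd_left (pow_dvd_pow _ hkr) _)),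
            Nat.cast_pow, neg_mul_comm, mul_comm (k : ℝ), Real.rpow_mul_natCast hp0, mul_comm]
        · intro k hk
          rw [mem_range, not_lt] at hk
          rw [C_prime_pow_neg_eq_zero_of_odd hp hn (odd_two_mul_add_one m) (by omega),
            Nat.cast_zero, zero_mul]
    _ = (1 + (p : ℝ) ^ (-s)) *
          ∑ j ∈ range ((2 * m + 1 + 1) / 2), ((p : ℝ) ^ (1 - 2 * s)) ^ j := by
        rw [sum_range_two_mul_pow_div_two, hq, show (2 * m + 1 + 1) / 2 = m + 1 by omega]

theorem stmt_11_general (p : ℕ) (hp : p.Prime)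
    (r : ℕ) (hr : Odd r) (n₀ : ℕ) (hpn₀ : ¬ p ∣ n₀)
    (s : ℝ) (hs : 1 / 2 < s) :
    (∑' k : ℕ, (C (p ^ k) (-((p : ℤ) ^ r * n₀)) : ℝ) * (p : ℝ) ^ (-(k : ℝ) * s) =
      ((1 - (p : ℝ) ^ (-(2 * s))) / (1 - (p : ℝ) ^ (-s))) *
        ((1 - (p : ℝ) ^ ((1 - 2 * s) * ((r : ℝ) + 1) / 2)) / (1 - (p : ℝ) ^ (1 - 2 * s)))) ∧
    (r = 1 → ∑' k : ℕ, (C (p ^ k) (-((p : ℤ) ^ r * n₀)) : ℝ) * (p : ℝ) ^ (-(k : ℝ) * s) =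
      (1 - (p : ℝ) ^ (-(2 * s))) / (1 - (p : ℝ) ^ (-s))) := by
  have hp1 : (1 : ℝ) < p := by exact_mod_cast hp.one_lt
  have hy : (p : ℝ) ^ (-s) < 1 := Real.rpow_lt_one_of_one_lt_of_neg hp1 (by linarith)
  have hq : (p : ℝ) ^ (1 - 2 * s) < 1 := Real.rpow_lt_one_of_one_lt_of_neg hp1 (by linarith)
  have hpair : (1 - (p : ℝ) ^ (-(2 * s))) / (1 - (p : ℝ) ^ (-s)) = 1 + (p : ℝ) ^ (-s) := by
    rw [div_eq_iff (by linarith), show -(2 * s) = -s * (2 : ℕ) by push_cast; ring,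
      Real.rpow_mul_natCast p.cast_nonneg]
    ring
  have hgeom (m : ℕ) : ∑ j ∈ range m, ((p : ℝ) ^ (1 - 2 * s)) ^ j =
      (1 - (p : ℝ) ^ ((1 - 2 * s) * m)) / (1 - (p : ℝ) ^ (1 - 2 * s)) := by
    rw [geom_sum_eq hq.ne, Real.rpow_mul_natCast p.cast_nonneg, ← neg_div_neg_eq, neg_sub,
      neg_sub]
  obtain ⟨m, rfl⟩ := hr
  have hsum := tsum_C_neg_prime_pow_mul_rpow hp hpn₀ (odd_two_mul_add_one m) s
  rw [show (2 * m + 1 + 1) / 2 = m + 1 by omega, hgeom, ← hpair] at hsum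
  have hexp : (1 - 2 * s) * (((2 * m + 1 : ℕ) : ℝ) + 1) / 2 = (1 - 2 * s) * ((m + 1 : ℕ) : ℝ) :=
    by push_cast; ring
  refine ⟨hexp ▸ hsum, fun hm => ?_⟩
  rw [hsum, show m = 0 by omega, zero_add, Nat.cast_one, mul_one, div_self (by linarith), mul_one]

theorem stmt_11 (p : ℕ) (hp : p.Prime) (hp2 : p ≠ 2) (hp3 : p ≠ 3)
    (r : ℕ) (hr : Odd r) (hrpos : 0 < r) (n₀ : ℕ) (hn₀ : 0 < n₀) (hpn₀ : ¬ p ∣ n₀)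
    (s : ℝ) (hs : 1 / 2 < s) :
    (∑' k : ℕ, (C (p ^ k) (-((p : ℤ) ^ r * n₀)) : ℝ) * (p : ℝ) ^ (-(k : ℝ) * s) =
      ((1 - (p : ℝ) ^ (-(2 * s))) / (1 - (p : ℝ) ^ (-s))) *
        ((1 - (p : ℝ) ^ ((1 - 2 * s) * ((r : ℝ) + 1) / 2)) / (1 - (p : ℝ) ^ (1 - 2 * s)))) ∧
    (r = 1 → ∑' k : ℕ, (C (p ^ k) (-((p : ℤ) ^ r * n₀)) : ℝ) * (p : ℝ) ^ (-(k : ℝ) * s) =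
      (1 - (p : ℝ) ^ (-(2 * s))) / (1 - (p : ℝ) ^ (-s))) :=
  stmt_11_general p hp r hr n₀ hpn₀ s hs
end
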